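/- For every t ∈ ℂ with t ≠ 0, the bracket on ℂ⁵ defined by [e₃,e₄] = e₂, [e₄,e₃] = −e₂, [e₃,e₅] = e₁, [e₅,e₃] = −e₁, [e₄,e₅] = e₃, [e₅,e₄] = −e₃, [e₅,e₅] = e₂, [e₁,e₃] = t·e₂, [e₃,e₁] = −t·e₂, [e₁,e₅] = −t·e₃, [e₅,e₁] = t·e₃ (the deformation of the metric Leibniz algebra W̃₃ along the 2-cocycle ψ₁(e₁,e₃) = e₂, ψ₁(e₃,e₁) = −e₂, ψ₁(e₁,e₅) = −e₃, ψ₁(e₅,e₁) = e₃) is isomorphic to the Leibniz algebra 𝔏₂ ⊕ ℂ on ℂ⁵ with bracket [e₁,e₂] = e₃, [e₂,e₁] = −e₃, [e₁,e₄] = e₁, [e₄,e₁] = −e₁, [e₄,e₂] = e₂, [e₂,e₄] = −e₂, [e₄,e₄] = e₃, and all brackets involving e₅ equal to zero. -/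
import Mathlib


/-- The deformation of the metric Leibniz algebra `W̃₃` on `ℂ⁵` along the
2-cocycle `ψ₁(e₁,e₃) = e₂`, `ψ₁(e₃,e₁) = -e₂`, `ψ₁(e₁,e₅) = -e₃`,
`ψ₁(e₅,e₁) = e₃`: the brackets `[e₃,e₄] = e₂`, `[e₄,e₃] = -e₂`,
`[e₃,e₅] = e₁`, `[e₅,e₃] = -e₁`, `[e₄,e₅] = e₃`, `[e₅,e₄] = -e₃`,
`[e₅,e₅] = e₂`, `[e₁,e₃] = t·e₂`, `[e₃,e₁] = -t·e₂`, `[e₁,e₅] = -t·e₃`,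
`[e₅,e₁] = t·e₃`, in coordinates. -/
def W3tildeDeformed (t : ℂ) (x y : Fin 5 → ℂ) : Fin 5 → ℂ :=
  ![x 2 * y 4 - x 4 * y 2,
    x 2 * y 3 - x 3 * y 2 + x 4 * y 4 + t * (x 0 * y 2 - x 2 * y 0),
    x 3 * y 4 - x 4 * y 3 + t * (x 4 * y 0 - x 0 * y 4),
    0,
    0]

/-- The bracket of the Leibniz algebra `𝔏₂ ⊕ ℂ` on `ℂ⁵`: `[e₁,e₂] = e₃`,
`[e₂,e₁] = -e₃`, `[e₁,e₄] = e₁`, `[e₄,e₁] = -e₁`, `[e₄,e₂] = e₂`,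
`[e₂,e₄] = -e₂`, `[e₄,e₄] = e₃`, all brackets involving `e₅` zero,
in coordinates. -/
def L2PlusCBracket (x y : Fin 5 → ℂ) : Fin 5 → ℂ :=
  ![x 0 * y 3 - x 3 * y 0,
    x 3 * y 1 - x 1 * y 3,
    x 0 * y 1 - x 1 * y 0 + x 3 * y 3,
    0,
    0]

/-- The forward map of the isomorphism, where `s² = -t` and `u = s⁻¹`. -/
noncomputable def W3Tmap (s u : ℂ) (y : Fin 5 → ℂ) : Fin 5 → ℂ :=
  ![(y 0 + u * y 2 + u ^ 2 * y 3) / 2,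
    s ^ 5 * y 0 - s ^ 4 * y 2 + s ^ 3 * y 3,
    s ^ 2 * y 1,
    s * y 4,
    -(u ^ 2 * y 3)]

/-- The inverse map of the isomorphism, where `s² = -t` and `u = s⁻¹`. -/
noncomputable def W3Smap (s u : ℂ) (x : Fin 5 → ℂ) : Fin 5 → ℂ :=
  ![x 0 + u ^ 5 * x 1 / 2 + x 4,
    u ^ 2 * x 2,
    s * x 0 - u ^ 4 * x 1 / 2,
    -(s ^ 2 * x 4),
    u * x 3]

/-- `W3Tmap` as a linear map. -/
noncomputable def W3Tlin (s u : ℂ) : (Fin 5 → ℂ) →ₗ[ℂ] (Fin 5 → ℂ) where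
  toFun := W3Tmap s u
  map_add' := by
    intro a b; funext i; fin_cases i <;> simp [W3Tmap] <;> ring
  map_smul' := by
    intro c a; funext i; fin_cases i <;> simp [W3Tmap] <;> ring

/-- `W3Smap` as a linear map. -/
noncomputable def W3Slin (s u : ℂ) : (Fin 5 → ℂ) →ₗ[ℂ] (Fin 5 → ℂ) where
  toFun := W3Smap s u
  map_add' := by
    intro a b; funext i; fin_cases i <;> simp [W3Smap] <;> ring
  map_smul' := by
    intro c a; funext i; fin_cases i <;> simp [W3Smap] <;> ring

/-- For every `t ≠ 0`, the deformation of `W̃₃` along the 2-cocycle `ψ₁` is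
isomorphic to `𝔏₂ ⊕ ℂ`. -/
theorem W3tilde_deformation_iso_L2PlusC :
    ∀ t : ℂ, t ≠ 0 →
      ∃ T : (Fin 5 → ℂ) ≃ₗ[ℂ] (Fin 5 → ℂ),
        ∀ x y : Fin 5 → ℂ, T (W3tildeDeformed t x y) = L2PlusCBracket (T x) (T y) := by
  intro t ht
  obtain ⟨s, hs⟩ := IsAlgClosed.exists_pow_nat_eq (-t) (n := 2) (by norm_num)
  have htt : t = -s ^ 2 := by linear_combination hs
  subst htt
  clear hs
  have hs0 : s ≠ 0 := by intro h; apply ht; rw [h]; ring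
  have hu : s * s⁻¹ = 1 := mul_inv_cancel₀ hs0
  set u : ℂ := s⁻¹ with hudef
  clear_value u
  clear hudef hs0 ht
  refine ⟨LinearEquiv.ofLinear (W3Tlin s u) (W3Slin s u) ?_ ?_, ?_⟩
  · apply LinearMap.ext; intro x; funext i
    simp only [LinearMap.coe_comp, Function.comp_apply, LinearMap.id_coe, id_eq, W3Tlin,
      W3Slin, LinearMap.coe_mk, AddHom.coe_mk]
    fin_cases i
    · show W3Tmap s u (W3Smap s u x) 0 = x 0
      simp only [W3Tmap, W3Smap, Matrix.cons_val_zero, Matrix.cons_val_one, Matrix.head_cons,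
        Matrix.cons_val_two, Matrix.tail_cons, Matrix.cons_val_three, Matrix.cons_val_four]
      linear_combination (((-1/2) * (x 4)) + ((1/2) * (x 0)) + ((-1/2) * s * u * (x 4))) * hu
    · show W3Tmap s u (W3Smap s u x) 1 = x 1
      simp only [W3Tmap, W3Smap, Matrix.cons_val_zero, Matrix.cons_val_one, Matrix.head_cons,
        Matrix.cons_val_two, Matrix.tail_cons, Matrix.cons_val_three, Matrix.cons_val_four]
      linear_combination (((x 1)) + (s * u * (x 1)) + (s ^ 2 * u ^ 2 * (x 1)) + (s ^ 3 * u ^ 3 * (x 1)) + ((1/2) * s ^ 4 * u ^ 4 * (x 1))) * hu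
    · show W3Tmap s u (W3Smap s u x) 2 = x 2
      simp only [W3Tmap, W3Smap, Matrix.cons_val_zero, Matrix.cons_val_one, Matrix.head_cons,
        Matrix.cons_val_two, Matrix.tail_cons, Matrix.cons_val_three, Matrix.cons_val_four]
      linear_combination (((x 2)) + (s * u * (x 2))) * hu
    · show W3Tmap s u (W3Smap s u x) 3 = x 3
      simp only [W3Tmap, W3Smap, Matrix.cons_val_zero, Matrix.cons_val_one, Matrix.head_cons,
        Matrix.cons_val_two, Matrix.tail_cons, Matrix.cons_val_three, Matrix.cons_val_four]
      linear_combination (((x 3))) * hu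
    · show W3Tmap s u (W3Smap s u x) 4 = x 4
      simp only [W3Tmap, W3Smap, Matrix.cons_val_zero, Matrix.cons_val_one, Matrix.head_cons,
        Matrix.cons_val_two, Matrix.tail_cons, Matrix.cons_val_three, Matrix.cons_val_four]
      linear_combination (((x 4)) + (s * u * (x 4))) * hu
  · apply LinearMap.ext; intro y; funext i
    simp only [LinearMap.coe_comp, Function.comp_apply, LinearMap.id_coe, id_eq, W3Tlin,
      W3Slin, LinearMap.coe_mk, AddHom.coe_mk]
    fin_cases i
    · show W3Smap s u (W3Tmap s u y) 0 = y 0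
      simp only [W3Tmap, W3Smap, Matrix.cons_val_zero, Matrix.cons_val_one, Matrix.head_cons,
        Matrix.cons_val_two, Matrix.tail_cons, Matrix.cons_val_three, Matrix.cons_val_four]
      linear_combination (((1/2) * (y 0)) + ((-1/2) * u * (y 2)) + ((1/2) * u ^ 2 * (y 3)) + ((1/2) * s * u * (y 0)) + ((-1/2) * s * u ^ 2 * (y 2)) + ((1/2) * s * u ^ 3 * (y 3)) + ((1/2) * s ^ 2 * u ^ 2 * (y 0)) + ((-1/2) * s ^ 2 * u ^ 3 * (y 2)) + ((1/2) * s ^ 2 * u ^ 4 * (y 3)) + ((1/2) * s ^ 3 * u ^ 3 * (y 0)) + ((-1/2) * s ^ 3 * u ^ 4 * (y 2)) + ((1/2) * s ^ 4 * u ^ 4 * (y 0))) * hu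
    · show W3Smap s u (W3Tmap s u y) 1 = y 1
      simp only [W3Tmap, W3Smap, Matrix.cons_val_zero, Matrix.cons_val_one, Matrix.head_cons,
        Matrix.cons_val_two, Matrix.tail_cons, Matrix.cons_val_three, Matrix.cons_val_four]
      linear_combination (((y 1)) + (s * u * (y 1))) * hu
    · show W3Smap s u (W3Tmap s u y) 2 = y 2
      simp only [W3Tmap, W3Smap, Matrix.cons_val_zero, Matrix.cons_val_one, Matrix.head_cons,
        Matrix.cons_val_two, Matrix.tail_cons, Matrix.cons_val_three, Matrix.cons_val_four]
      linear_combination (((y 2)) + ((-1/2) * s * (y 0)) + ((1/2) * s * u * (y 2)) + ((-1/2) * s * u ^ 2 * (y 3)) + ((-1/2) * s ^ 2 * u * (y 0)) + ((1/2) * s ^ 2 * u ^ 2 * (y 2)) + ((-1/2) * s ^ 2 * u ^ 3 * (y 3)) + ((-1/2) * s ^ 3 * u ^ 2 * (y 0)) + ((1/2) * s ^ 3 * u ^ 3 * (y 2)) + ((-1/2) * s ^ 4 * u ^ 3 * (y 0))) * hu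
    · show W3Smap s u (W3Tmap s u y) 3 = y 3
      simp only [W3Tmap, W3Smap, Matrix.cons_val_zero, Matrix.cons_val_one, Matrix.head_cons,
        Matrix.cons_val_two, Matrix.tail_cons, Matrix.cons_val_three, Matrix.cons_val_four]
      linear_combination (((y 3)) + (s * u * (y 3))) * hu
    · show W3Smap s u (W3Tmap s u y) 4 = y 4
      simp only [W3Tmap, W3Smap, Matrix.cons_val_zero, Matrix.cons_val_one, Matrix.head_cons,
        Matrix.cons_val_two, Matrix.tail_cons, Matrix.cons_val_three, Matrix.cons_val_four]
      linear_combination (((y 4))) * hu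
  · intro x y
    funext i
    simp only [LinearEquiv.ofLinear_apply, W3Tlin, LinearMap.coe_mk, AddHom.coe_mk]
    fin_cases i
    · show W3Tmap s u (W3tildeDeformed (-s ^ 2) x y) 0
          = L2PlusCBracket (W3Tmap s u x) (W3Tmap s u y) 0
      simp only [W3Tmap, W3tildeDeformed, L2PlusCBracket, Matrix.cons_val_zero,
        Matrix.cons_val_one, Matrix.head_cons, Matrix.cons_val_two, Matrix.tail_cons,
        Matrix.cons_val_three, Matrix.cons_val_four]
      linear_combination (((1/2) * (x 4) * (y 2)) + ((-1/2) * (x 2) * (y 4)) + ((1/2) * u * (x 4) * (y 3)) + ((-1/2) * u * (x 3) * (y 4)) + ((-1/2) * s * (x 4) * (y 0)) + ((1/2) * s * (x 0) * (y 4))) * hu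
    · show W3Tmap s u (W3tildeDeformed (-s ^ 2) x y) 1
          = L2PlusCBracket (W3Tmap s u x) (W3Tmap s u y) 1
      simp only [W3Tmap, W3tildeDeformed, L2PlusCBracket, Matrix.cons_val_zero,
        Matrix.cons_val_one, Matrix.head_cons, Matrix.cons_val_two, Matrix.tail_cons,
        Matrix.cons_val_three, Matrix.cons_val_four]
      ring
    · show W3Tmap s u (W3tildeDeformed (-s ^ 2) x y) 2
          = L2PlusCBracket (W3Tmap s u x) (W3Tmap s u y) 2
      simp only [W3Tmap, W3tildeDeformed, L2PlusCBracket, Matrix.cons_val_zero,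
        Matrix.cons_val_one, Matrix.head_cons, Matrix.cons_val_two, Matrix.tail_cons,
        Matrix.cons_val_three, Matrix.cons_val_four]
      linear_combination ((s ^ 2 * (x 3) * (y 2)) + (-(s ^ 2 * (x 2) * (y 3))) + ((-1/2) * s ^ 3 * (x 3) * (y 0)) + ((1/2) * s ^ 3 * (x 0) * (y 3)) + ((1/2) * s ^ 3 * u * (x 3) * (y 2)) + ((-1/2) * s ^ 3 * u * (x 2) * (y 3)) + ((-1/2) * s ^ 4 * (x 2) * (y 0)) + ((1/2) * s ^ 4 * (x 0) * (y 2)) + ((-1/2) * s ^ 4 * u * (x 3) * (y 0)) + ((1/2) * s ^ 4 * u * (x 0) * (y 3))) * hu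
    · show W3Tmap s u (W3tildeDeformed (-s ^ 2) x y) 3
          = L2PlusCBracket (W3Tmap s u x) (W3Tmap s u y) 3
      simp only [W3Tmap, W3tildeDeformed, L2PlusCBracket, Matrix.cons_val_zero,
        Matrix.cons_val_one, Matrix.head_cons, Matrix.cons_val_two, Matrix.tail_cons,
        Matrix.cons_val_three, Matrix.cons_val_four]
      ring
    · show W3Tmap s u (W3tildeDeformed (-s ^ 2) x y) 4
          = L2PlusCBracket (W3Tmap s u x) (W3Tmap s u y) 4
      simp only [W3Tmap, W3tildeDeformed, L2PlusCBracket, Matrix.cons_val_zero,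
        Matrix.cons_val_one, Matrix.head_cons, Matrix.cons_val_two, Matrix.tail_cons,
        Matrix.cons_val_three, Matrix.cons_val_four]
      ring
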